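/- Let $\gamma$ denote the Euler--Mascheroni constant and set $\widetilde{D} = e^{(1-\gamma)/2}$. Then $1 < \widetilde{D} < 2$, and defining $\widetilde{R}_n = \frac{2}{\sqrt{\pi}}\left(\widetilde{D}^{k-1} + (j_n-1)\frac{\widetilde{D}^k - \widetilde{D}^{k-1}}{2^{k-1}}\right)$ for $n \in B_k = \{2^{k-1}+1,\ldots,2^k\}$ with $j_n = n - 2^{k-1}$, one has for all $n \ge 2$: $\widetilde{R}_{n+1} - \widetilde{R}_n \le \left(\frac{4}{\sqrt{\pi}} - \frac{4}{e^{(1-\gamma)/2}\sqrt{\pi}}\right) n^{\log_2\left(e^{(1-\gamma)/2}/2\right)} < 0.44\, n^{-0.695025}$. -/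

import Mathlib

open Real

noncomputable def RseqC (D : ℝ) (n : ℕ) : ℝ :=
  if n ≤ 1 then 1
  else (2 / Real.sqrt π) * (D ^ (Nat.clog 2 n - 1) +
    ((n : ℝ) - 2 ^ (Nat.clog 2 n - 1) - 1) *
      (D ^ Nat.clog 2 n - D ^ (Nat.clog 2 n - 1)) / 2 ^ (Nat.clog 2 n - 1))

/-!
On the block `2 ^ k < n ≤ 2 ^ (k + 1)` the sequence `RseqC D` is affine in `n`, and every step
`RseqC D (n + 1) - RseqC D n` there (including the one leaving the block) equals
`(2 / √π) (D ^ (k + 1) - D ^ k) / 2 ^ k = (4 / √π - 4 / (D √π)) (D / 2) ^ (k + 1)`.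
For `D ≤ 2` the exponent `logb 2 (D / 2)` is nonpositive, so `n ≤ 2 ^ (k + 1)` gives
`(D / 2) ^ (k + 1) ≤ n ^ logb 2 (D / 2)`.

The numerical claims for `D = exp ((1 - γ) / 2)` rest on `γ > 0.5772153`. The truncated
Euler–Maclaurin approximations `H m - log m - 1 / (2m) + 1 / (12 m (m + 1))` of `γ` increase
from `m = 7` on, so their value at `m = 64` is a lower bound.
-/

lemma log_one_add_le_taylor {y : ℝ} (h0 : 0 ≤ y) (h1 : y < 1) :
    log (1 + y) ≤ y - y ^ 2 / 2 + y ^ 3 / 3 - y ^ 4 / 4 + y ^ 5 / (1 - y) := by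
  have hy : |(-y)| = y := by rw [abs_neg, abs_of_nonneg h0]
  have h := abs_log_sub_add_sum_range_le (x := -y) (by rwa [hy]) 4
  simp only [Finset.sum_range_succ, Finset.sum_range_zero, hy] at h
  norm_num at h
  linarith [(abs_le.mp h).2]

noncomputable def eulerMascheroniLower (m : ℕ) : ℝ :=
  harmonic m - log m - (1 / (2 * m) - 1 / (12 * m * (m + 1)))

lemma log_one_add_inv_le {x : ℝ} (hx : 7 ≤ x) :
    log (1 + 1 / x) ≤ 1 / (x + 1) + (1 / (2 * x) - 1 / (12 * x * (x + 1))) -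
      (1 / (2 * (x + 1)) - 1 / (12 * (x + 1) * (x + 1 + 1))) := by
  have hx1 : 0 < x - 1 := by linarith
  have htaylor := log_one_add_le_taylor (y := 1 / x) (by positivity)
    ((div_lt_one (by positivity)).2 (by linarith))
  -- `3x⁴ - 14x³ - 31x² - 30x` is the numerator of the gap left by the Taylor bound
  have hgap : 0 ≤ (3 * x ^ 4 - 14 * x ^ 3 - 31 * x ^ 2 - 30 * x) /
      (12 * x ^ 5 * (x - 1) * (x + 1) * (x + 2)) := by
    refine div_nonneg ?_ (by positivity)
    nlinarith [mul_nonneg (mul_nonneg (sub_nonneg.2 hx) (sq_nonneg x)) (by linarith : (0:ℝ) ≤ x)]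
  have hid : (1 / (x + 1) + (1 / (2 * x) - 1 / (12 * x * (x + 1))) -
      (1 / (2 * (x + 1)) - 1 / (12 * (x + 1) * (x + 1 + 1)))) -
      (1 / x - (1 / x) ^ 2 / 2 + (1 / x) ^ 3 / 3 - (1 / x) ^ 4 / 4 + (1 / x) ^ 5 / (1 - 1 / x)) =
      (3 * x ^ 4 - 14 * x ^ 3 - 31 * x ^ 2 - 30 * x) /
        (12 * x ^ 5 * (x - 1) * (x + 1) * (x + 2)) := by
    rw [show 1 - 1 / x = (x - 1) / x by field_simp]
    field_simp
    ring
  linarith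

lemma eulerMascheroniLower_le_succ {m : ℕ} (hm : 7 ≤ m) :
    eulerMascheroniLower m ≤ eulerMascheroniLower (m + 1) := by
  have hx : (7 : ℝ) ≤ m := by exact_mod_cast hm
  have hlog : log ((m : ℝ) + 1) - log m = log (1 + 1 / m) := by
    rw [← log_div (by positivity) (by positivity)]
    congr 1
    field_simp
  have := log_one_add_inv_le hx
  simp only [eulerMascheroniLower, harmonic_succ, Nat.cast_add, Nat.cast_one, Rat.cast_add,
    Rat.cast_inv, Rat.cast_natCast, Rat.cast_one]
  rw [inv_eq_one_div]
  linarith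

lemma eulerMascheroniLower_mono {m n : ℕ} (hm : 7 ≤ m) (hmn : m ≤ n) :
    eulerMascheroniLower m ≤ eulerMascheroniLower n := by
  induction n, hmn using Nat.le_induction with
  | base => rfl
  | succ n hmn ih => exact ih.trans (eulerMascheroniLower_le_succ (hm.trans hmn))

lemma eulerMascheroniLower_le_harmonic_sub_log {m : ℕ} (hm : 1 ≤ m) :
    eulerMascheroniLower m ≤ harmonic m - log m := by
  have hx : (1 : ℝ) ≤ m := by exact_mod_cast hm
  have : 1 / (12 * (m : ℝ) * (m + 1)) ≤ 1 / (2 * m) :=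
    one_div_le_one_div_of_le (by positivity) (by nlinarith)
  simp only [eulerMascheroniLower]
  linarith

lemma eulerMascheroniLower_le_eulerMascheroniConstant {m : ℕ} (hm : 7 ≤ m) :
    eulerMascheroniLower m ≤ eulerMascheroniConstant := by
  refine ge_of_tendsto tendsto_harmonic_sub_log ?_
  filter_upwards [Filter.eventually_ge_atTop m] with n hn
  exact (eulerMascheroniLower_mono hm hn).trans
    (eulerMascheroniLower_le_harmonic_sub_log (by omega))

lemma eulerMascheroniConstant_gt : (0.5772153 : ℝ) < eulerMascheroniConstant := by
  refine lt_of_lt_of_le ?_ (eulerMascheroniLower_le_eulerMascheroniConstant (m := 64) (by norm_num))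
  have hH : harmonic 64 = 623171679694215690971693339 / 131362987122535807501262400 := by
    norm_num [harmonic, Finset.sum_range_succ]
  have hlog : log (64 : ℕ) = 6 * log 2 := by
    rw [show ((64 : ℕ) : ℝ) = 2 ^ 6 by norm_num, log_pow]; norm_num
  rw [eulerMascheroniLower, hH, hlog]
  norm_num
  linarith [log_two_lt_d9]

lemma Nat.clog_eq_succ_of_pow_lt_of_le_pow {b k n : ℕ} (hb : 1 < b) (hlo : b ^ k < n)
    (hhi : n ≤ b ^ (k + 1)) : Nat.clog b n = k + 1 :=
  le_antisymm (Nat.clog_le_of_le_pow hhi) ((Nat.lt_clog_iff_pow_lt hb).2 hlo)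

lemma RseqC_of_pow_lt_of_le_pow (D : ℝ) {k n : ℕ} (hlo : 2 ^ k < n) (hhi : n ≤ 2 ^ (k + 1)) :
    RseqC D n = 2 / √π * (D ^ k + ((n : ℝ) - 2 ^ k - 1) * (D ^ (k + 1) - D ^ k) / 2 ^ k) := by
  have hn : ¬ n ≤ 1 := by have := Nat.one_le_two_pow (n := k); omega
  rw [RseqC, if_neg hn, Nat.clog_eq_succ_of_pow_lt_of_le_pow one_lt_two hlo hhi,
    Nat.add_sub_cancel]

lemma RseqC_succ_sub_of_pow_lt_of_le_pow (D : ℝ) {k n : ℕ} (hlo : 2 ^ k < n)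
    (hhi : n ≤ 2 ^ (k + 1)) :
    RseqC D (n + 1) - RseqC D n = 2 / √π * ((D ^ (k + 1) - D ^ k) / 2 ^ k) := by
  rw [RseqC_of_pow_lt_of_le_pow D hlo hhi]
  rcases hhi.lt_or_eq with hlt | rfl
  · rw [RseqC_of_pow_lt_of_le_pow D (by omega) hlt]
    push_cast
    field_simp
    ring
  · rw [RseqC_of_pow_lt_of_le_pow D (k := k + 1) (by omega)
      (by rw [pow_succ 2 (k + 1)]; have := Nat.one_le_two_pow (n := k + 1); omega)]
    push_cast
    field_simp
    ring

lemma pow_le_rpow_logb {a b x : ℝ} {k : ℕ} (hb : 1 < b) (ha0 : 0 < a) (ha1 : a ≤ 1)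
    (hx : 0 < x) (hxb : x ≤ b ^ k) : a ^ k ≤ x ^ logb b a := by
  have hlogb : logb b a ≤ 0 := logb_nonpos hb ha0.le ha1
  calc a ^ k = (b ^ logb b a) ^ k := by rw [rpow_logb (by linarith) hb.ne' ha0]
    _ = ((b ^ k : ℝ)) ^ logb b a := rpow_pow_comm (by linarith) _ _
    _ ≤ x ^ logb b a := rpow_le_rpow_of_nonpos hx hxb hlogb

lemma four_div_sqrt_pi_sub_nonneg {D : ℝ} (hD : 1 ≤ D) : 0 ≤ 4 / √π - 4 / (D * √π) := by
  have hπ : 0 < √π := sqrt_pos.2 pi_pos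
  rw [sub_nonneg]
  exact div_le_div_of_nonneg_left (by norm_num) hπ (le_mul_of_one_le_left hπ.le hD)

theorem RseqC_succ_sub_le {D : ℝ} (hD1 : 1 ≤ D) (hD2 : D ≤ 2) {n : ℕ} (hn : 2 ≤ n) :
    RseqC D (n + 1) - RseqC D n ≤ (4 / √π - 4 / (D * √π)) * (n : ℝ) ^ logb 2 (D / 2) := by
  set k := Nat.clog 2 n - 1
  have hk : Nat.clog 2 n = k + 1 := by have := Nat.clog_pos one_lt_two hn; omega
  have hlo : 2 ^ k < n := Nat.pow_pred_clog_lt_self one_lt_two hn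
  have hhi : n ≤ 2 ^ (k + 1) := hk ▸ Nat.le_pow_clog one_lt_two n
  have hD0 : D ≠ 0 := by positivity
  rw [RseqC_succ_sub_of_pow_lt_of_le_pow D hlo hhi]
  calc 2 / √π * ((D ^ (k + 1) - D ^ k) / 2 ^ k)
      = (4 / √π - 4 / (D * √π)) * (D / 2) ^ (k + 1) := by rw [div_pow]; field_simp; ring
    _ ≤ (4 / √π - 4 / (D * √π)) * (n : ℝ) ^ logb 2 (D / 2) := by
      refine mul_le_mul_of_nonneg_left
        (pow_le_rpow_logb one_lt_two (by positivity) (by linarith) (by positivity) ?_)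
        (four_div_sqrt_pi_sub_nonneg hD1)
      exact_mod_cast hhi

lemma four_div_sqrt_pi_sub_lt {D : ℝ} (hD0 : 0 < D) (hD : D < 1.24) :
    4 / √π - 4 / (D * √π) < 0.44 := by
  have hπ : (1.77 : ℝ) < √π := lt_sqrt_of_sq_lt (by linarith [pi_gt_d2])
  have hinv : 1 / 1.24 < 1 / D := one_div_lt_one_div_of_lt hD0 hD
  rw [show 4 / √π - 4 / (D * √π) = 4 * (1 - 1 / D) / √π by field_simp,
    div_lt_iff₀ (by linarith)]
  nlinarith

lemma logb_two_exp_div_two (x : ℝ) : logb 2 (exp x / 2) = x / log 2 - 1 := by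
  rw [logb, log_div (exp_pos x).ne' two_ne_zero, log_exp, sub_div, div_self (by positivity)]

lemma exp_one_sub_eulerMascheroniConstant_half_lt :
    exp ((1 - eulerMascheroniConstant) / 2) < 1.24 := by
  have hx : (1 - eulerMascheroniConstant) / 2 < 0.212 := by linarith [eulerMascheroniConstant_gt]
  have hx0 : 0 < (1 - eulerMascheroniConstant) / 2 := by
    linarith [eulerMascheroniConstant_lt_two_thirds]
  set x := (1 - eulerMascheroniConstant) / 2
  calc exp x = exp (x / 8) ^ 8 := by rw [← exp_nat_mul]; ring_nf
    _ < (1 / (1 - x / 8)) ^ 8 := by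
      gcongr
      exact exp_bound_div_one_sub_of_interval' (by positivity) (by linarith)
    _ ≤ (1 / (1 - 0.212 / 8)) ^ 8 := by
      have : 0 < 1 - x / 8 := by linarith
      gcongr
    _ < 1.24 := by norm_num

theorem complex_fundamental_lemma :
    (1 < Real.exp ((1 - Real.eulerMascheroniConstant) / 2) ∧
      Real.exp ((1 - Real.eulerMascheroniConstant) / 2) < 2) ∧
    ∀ n : ℕ, 2 ≤ n →
      RseqC (Real.exp ((1 - Real.eulerMascheroniConstant) / 2)) (n + 1) -
          RseqC (Real.exp ((1 - Real.eulerMascheroniConstant) / 2)) n ≤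
        (4 / Real.sqrt π - 4 / (Real.exp ((1 - Real.eulerMascheroniConstant) / 2) * Real.sqrt π)) *
          (n : ℝ) ^ (Real.logb 2 (Real.exp ((1 - Real.eulerMascheroniConstant) / 2) / 2)) ∧
      (4 / Real.sqrt π - 4 / (Real.exp ((1 - Real.eulerMascheroniConstant) / 2) * Real.sqrt π)) *
          (n : ℝ) ^ (Real.logb 2 (Real.exp ((1 - Real.eulerMascheroniConstant) / 2) / 2)) <
        0.44 * (n : ℝ) ^ (-(0.695025 : ℝ)) := by
  have hγ := eulerMascheroniConstant_gt
  have hD1 : 1 < exp ((1 - eulerMascheroniConstant) / 2) :=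
    one_lt_exp_iff.2 (by linarith [eulerMascheroniConstant_lt_two_thirds])
  have hD2 := exp_one_sub_eulerMascheroniConstant_half_lt
  have hexponent : logb 2 (exp ((1 - eulerMascheroniConstant) / 2) / 2) ≤ -0.695025 := by
    rw [logb_two_exp_div_two, div_sub_one (by positivity), div_le_iff₀ (by positivity)]
    linarith [log_two_gt_d9]
  refine ⟨⟨hD1, by linarith⟩, fun n hn => ⟨RseqC_succ_sub_le hD1.le (by linarith) hn, ?_⟩⟩
  have hn1 : (1 : ℝ) ≤ n := by exact_mod_cast (by omega : 1 ≤ n)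
  exact (mul_le_mul_of_nonneg_left (rpow_le_rpow_of_exponent_le hn1 hexponent)
    (four_div_sqrt_pi_sub_nonneg hD1.le)).trans_lt
    (mul_lt_mul_of_pos_right (four_div_sqrt_pi_sub_lt (by positivity) hD2) (by positivity))
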